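/- arXiv:2312.03915 — 9 statements merged into one kernel-verified Lean document; each statement's English description precedes it below -/
import Mathlib

section
/- For every σ > 0 and every d > 0 there exist δ₋, δ₊ ∈ (0,1), depending only on σ and d, such that for all q ≥ σ and all x ≥ d one has E[ 1_{τ⁻₀(x) < ∞} · exp(−q · τ⁻₀(x)) ] ≤ δ₋, and for all q ≥ σ and all x ≤ −d one has E[ 1_{τ⁺₀(x) < ∞} · exp(−q · τ⁺₀(x)) ] ≤ δ₊. (In words: starting at distance at least d from a barrier, the expected discount factor accumulated until the process crosses the barrier is bounded away from 1, uniformly in the discount rate q ≥ σ.) -/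
open MeasureTheory ProbabilityTheory Set
open scoped ENNReal

/-- First entrance time of `x + X_t` into `[h, ∞)`, with `inf ∅ = ∞`. -/
noncomputable def tauPlus {Ω : Type*} (X : ℝ → Ω → ℝ) (x h : ℝ) (ω : Ω) : ℝ≥0∞ :=
  sInf ((fun s : ℝ => ENNReal.ofReal s) '' {s : ℝ | 0 ≤ s ∧ h ≤ x + X s ω})

/-- First entrance time of `x + X_t` into `(-∞, h]`, with `inf ∅ = ∞`. -/
noncomputable def tauMinus {Ω : Type*} (X : ℝ → Ω → ℝ) (x h : ℝ) (ω : Ω) : ℝ≥0∞ :=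
  sInf ((fun s : ℝ => ENNReal.ofReal s) '' {s : ℝ | 0 ≤ s ∧ x + X s ω ≤ h})

/-- The discount factor `1_{t<∞} e^{-q t}`. -/
noncomputable def levyDiscount (q : ℝ) (t : ℝ≥0∞) : ℝ :=
  if t = ⊤ then 0 else Real.exp (-(q * t.toReal))

/-!
As `ε ↓ 0`, the events `{X_s < -d/2 for some s ∈ [0, ε)}` decrease, by right-continuity, to a
subset of `{X₀ ≤ -d/2}`, which is null, so for some `ε > 0` this event has probability `p < 1`. Off it, the process started at `x ≥ d` cannot
reach `(-∞, 0]` before time `ε`, so the discount factor is at most `c = e^{-σε} < 1`; on it, the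
factor is at most `1`. Hence the expectation is at most `c + (1 - c) p < 1`, uniformly in
`q ≥ σ` and `x ≥ d`. The upward case follows by applying this to `-X`.
-/

lemma levyDiscount_nonneg (q : ℝ) (t : ℝ≥0∞) : 0 ≤ levyDiscount q t := by
  unfold levyDiscount
  split
  · exact le_rfl
  · exact (Real.exp_pos _).le

lemma levyDiscount_le_one {q : ℝ} (hq : 0 ≤ q) (t : ℝ≥0∞) : levyDiscount q t ≤ 1 := by
  unfold levyDiscount
  split
  · exact zero_le_one
  · exact Real.exp_le_one_iff.mpr (neg_nonpos.mpr (mul_nonneg hq ENNReal.toReal_nonneg))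

lemma levyDiscount_le_exp_of_ofReal_le {q ε : ℝ} {t : ℝ≥0∞} (hq : 0 ≤ q)
    (ht : ENNReal.ofReal ε ≤ t) : levyDiscount q t ≤ Real.exp (-(q * ε)) := by
  unfold levyDiscount
  split
  · exact (Real.exp_pos _).le
  · next htop =>
    have hεt : ε ≤ t.toReal := (ENNReal.ofReal_le_iff_le_toReal htop).mp ht
    exact Real.exp_le_exp.mpr (neg_le_neg (mul_le_mul_of_nonneg_left hεt hq))

lemma integral_le_add_mul_measureReal {Ω : Type*} [MeasurableSpace Ω] {P : Measure Ω}
    [IsProbabilityMeasure P] {f : Ω → ℝ} {A : Set Ω} {c : ℝ} (hA : MeasurableSet A)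
    (hf₀ : ∀ ω, 0 ≤ f ω) (hf₁ : ∀ ω, f ω ≤ 1) (hfc : ∀ ω ∉ A, f ω ≤ c) :
    ∫ ω, f ω ∂P ≤ c + (1 - c) * P.real A := by
  have hg : Integrable (fun ω => c + A.indicator (fun _ => 1 - c) ω) P :=
    (integrable_const c).add ((integrable_const (1 - c)).indicator hA)
  have hfg : ∀ ω, f ω ≤ c + A.indicator (fun _ => 1 - c) ω := by
    intro ω
    by_cases hω : ω ∈ A
    · simpa [hω] using hf₁ ω
    · simpa [hω] using hfc ω hω
  calc ∫ ω, f ω ∂P ≤ ∫ ω, c + A.indicator (fun _ => 1 - c) ω ∂P :=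
        integral_mono_of_nonneg (.of_forall hf₀) hg (.of_forall hfg)
    _ = c + (1 - c) * P.real A := by
        rw [integral_add (integrable_const c) ((integrable_const (1 - c)).indicator hA),
          integral_const, integral_indicator_const _ hA]
        simp [mul_comm]

lemma exists_rat_mem_Ico_lt_of_continuousWithinAt_Ici {f : ℝ → ℝ} {s ε a : ℝ}
    (hf : ContinuousWithinAt f (Ici s) s) (hfs : f s < a) (hsε : s < ε) :
    ∃ r : ℚ, s ≤ r ∧ (r : ℝ) < ε ∧ f r < a := by
  obtain ⟨u, hsu, hu⟩ := mem_nhdsGE_iff_exists_Ico_subset.mp (hf (Iio_mem_nhds hfs))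
  obtain ⟨r, hsr, hr⟩ := exists_rat_btwn (lt_min hsu hsε)
  exact ⟨r, hsr.le, hr.trans_le (min_le_right _ _),
    hu ⟨hsr.le, hr.trans_le (min_le_left _ _)⟩⟩

section Dip

variable {Ω : Type*} {X : ℝ → Ω → ℝ}

def dipBelowBefore (X : ℝ → Ω → ℝ) (a ε : ℝ) : Set Ω :=
  {ω | ∃ s ∈ Ico 0 ε, X s ω < a}

lemma dipBelowBefore_mono {a ε ε' : ℝ} (h : ε ≤ ε') :
    dipBelowBefore X a ε ⊆ dipBelowBefore X a ε' :=
  fun _ ⟨s, hs, hXs⟩ => ⟨s, Ico_subset_Ico_right h hs, hXs⟩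

lemma dipBelowBefore_eq_iUnion_rat
    (hrc : ∀ ω : Ω, ∀ t : ℝ, ContinuousWithinAt (fun s => X s ω) (Ici t) t) (a ε : ℝ) :
    dipBelowBefore X a ε = ⋃ r : ℚ, {ω | (r : ℝ) ∈ Ico 0 ε ∧ X r ω < a} := by
  ext ω
  simp only [dipBelowBefore, mem_iUnion]
  constructor
  · rintro ⟨s, ⟨hs₀, hsε⟩, hXs⟩
    obtain ⟨r, hsr, hrε, hXr⟩ :=
      exists_rat_mem_Ico_lt_of_continuousWithinAt_Ici (hrc ω s) hXs hsε
    exact ⟨r, ⟨hs₀.trans hsr, hrε⟩, hXr⟩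
  · rintro ⟨r, hr, hXr⟩
    exact ⟨r, hr, hXr⟩

lemma measurableSet_dipBelowBefore [MeasurableSpace Ω] (hMeas : ∀ t : ℝ, Measurable (X t))
    (hrc : ∀ ω : Ω, ∀ t : ℝ, ContinuousWithinAt (fun s => X s ω) (Ici t) t) (a ε : ℝ) :
    MeasurableSet (dipBelowBefore X a ε) := by
  rw [dipBelowBefore_eq_iUnion_rat hrc]
  exact .iUnion fun r => (MeasurableSet.const _).inter
    (measurableSet_lt (hMeas r) measurable_const)

lemma biInter_dipBelowBefore_subset {a : ℝ}
    (hrc : ∀ ω : Ω, ContinuousWithinAt (fun s => X s ω) (Ici 0) 0) :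
    ⋂ ε > 0, dipBelowBefore X a ε ⊆ {ω | X 0 ω ≤ a} := by
  refine fun ω hω => show X 0 ω ≤ a from not_lt.mp fun ha => ?_
  obtain ⟨u, hu, hXu⟩ := mem_nhdsGE_iff_exists_Ico_subset.mp ((hrc ω) (Ioi_mem_nhds ha))
  obtain ⟨s, hs, hXs⟩ := mem_iInter₂.mp hω u hu
  exact (hXu hs).not_gt hXs

lemma exists_pos_measure_dipBelowBefore_lt_one [MeasurableSpace Ω] (P : Measure Ω)
    [IsProbabilityMeasure P] (hMeas : ∀ t : ℝ, Measurable (X t)) (hX0 : ∀ᵐ ω ∂P, X 0 ω = 0)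
    (hrc : ∀ ω : Ω, ∀ t : ℝ, ContinuousWithinAt (fun s => X s ω) (Ici t) t) {a : ℝ}
    (ha : a < 0) : ∃ ε > 0, P (dipBelowBefore X a ε) < 1 := by
  have hnull : P (⋂ ε > 0, dipBelowBefore X a ε) = 0 := by
    refine measure_mono_null (biInter_dipBelowBefore_subset (fun ω => hrc ω 0)) ?_
    exact measure_mono_null (fun ω (hω : X 0 ω ≤ a) => (hω.trans_lt ha).ne) (ae_iff.mp hX0)
  have htends := tendsto_measure_biInter_gt (μ := P) (a := (0 : ℝ))
    (fun ε _ => (measurableSet_dipBelowBefore hMeas hrc a ε).nullMeasurableSet)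
    (fun _ _ _ h => dipBelowBefore_mono h) ⟨1, one_pos, measure_ne_top P _⟩
  rw [hnull] at htends
  exact ((htends.eventually (gt_mem_nhds zero_lt_one)).and self_mem_nhdsWithin).exists.imp
    fun ε h => ⟨h.2, h.1⟩

lemma ofReal_le_tauMinus_of_notMem_dipBelowBefore {x h a ε : ℝ} {ω : Ω} (hxa : h - x < a)
    (hω : ω ∉ dipBelowBefore X a ε) : ENNReal.ofReal ε ≤ tauMinus X x h ω := by
  refine le_sInf ?_
  rintro _ ⟨s, ⟨hs₀, hs⟩, rfl⟩
  refine ENNReal.ofReal_le_ofReal (not_lt.mp fun hsε => hω ⟨s, ⟨hs₀, hsε⟩, ?_⟩)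
  linarith

end Dip

lemma exists_integral_levyDiscount_tauMinus_le {Ω : Type*} [MeasurableSpace Ω]
    (P : Measure Ω) [IsProbabilityMeasure P] (X : ℝ → Ω → ℝ)
    (hMeas : ∀ t : ℝ, Measurable (X t)) (hX0 : ∀ᵐ ω ∂P, X 0 ω = 0)
    (hrc : ∀ ω : Ω, ∀ t : ℝ, ContinuousWithinAt (fun s => X s ω) (Ici t) t)
    {σ d : ℝ} (hσ : 0 < σ) (hd : 0 < d) (h : ℝ) :
    ∃ δ ∈ Ioo (0 : ℝ) 1,
      ∀ q ≥ σ, ∀ x ≥ h + d, ∫ ω, levyDiscount q (tauMinus X x h ω) ∂P ≤ δ := by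
  obtain ⟨ε, hε, hdip⟩ :=
    exists_pos_measure_dipBelowBefore_lt_one P hMeas hX0 hrc (a := -(d / 2)) (by linarith)
  set A := dipBelowBefore X (-(d / 2)) ε
  set c := Real.exp (-(σ * ε))
  have hc₀ : 0 < c := Real.exp_pos _
  have hc₁ : c < 1 := Real.exp_lt_one_iff.mpr (by nlinarith)
  have hA : P.real A < 1 := by
    simpa [measureReal_def] using ENNReal.toReal_strict_mono ENNReal.one_ne_top hdip
  refine ⟨c + (1 - c) * P.real A, ⟨by positivity, by nlinarith⟩, fun q hq x hx => ?_⟩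
  have hq₀ : 0 ≤ q := hσ.le.trans hq
  refine integral_le_add_mul_measureReal (measurableSet_dipBelowBefore hMeas hrc _ _)
    (fun ω => levyDiscount_nonneg _ _) (fun ω => levyDiscount_le_one hq₀ _) fun ω hω => ?_
  calc levyDiscount q (tauMinus X x h ω) ≤ Real.exp (-(q * ε)) :=
        levyDiscount_le_exp_of_ofReal_le hq₀
          (ofReal_le_tauMinus_of_notMem_dipBelowBefore (by linarith) hω)
    _ ≤ c := Real.exp_le_exp.mpr (neg_le_neg (mul_le_mul_of_nonneg_right hq hε.le))

lemma tauPlus_eq_tauMinus_neg {Ω : Type*} (X : ℝ → Ω → ℝ) (x h : ℝ) (ω : Ω) :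
    tauPlus X x h ω = tauMinus (-X) (-x) (-h) ω := by
  unfold tauPlus tauMinus
  congr 3
  ext s
  simp only [Pi.neg_apply]
  constructor <;> rintro ⟨hs, hle⟩ <;> exact ⟨hs, by linarith⟩

theorem expected_discount_bounded_away_from_one_general
    {Ω : Type*} [MeasurableSpace Ω] (P : Measure Ω) [IsProbabilityMeasure P]
    (X : ℝ → Ω → ℝ)
    (hMeas : ∀ t : ℝ, Measurable (X t))
    (hX0 : ∀ᵐ ω ∂P, X 0 ω = 0)
    (hrc : ∀ ω : Ω, ∀ t : ℝ, ContinuousWithinAt (fun s => X s ω) (Set.Ici t) t) :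
    ∀ σ > (0 : ℝ), ∀ d > (0 : ℝ), ∃ δm δp : ℝ,
      δm ∈ Set.Ioo (0 : ℝ) 1 ∧ δp ∈ Set.Ioo (0 : ℝ) 1 ∧
      (∀ q ≥ σ, ∀ x ≥ d, (∫ ω, levyDiscount q (tauMinus X x 0 ω) ∂P) ≤ δm) ∧
      (∀ q ≥ σ, ∀ x ≤ -d, (∫ ω, levyDiscount q (tauPlus X x 0 ω) ∂P) ≤ δp) := by
  intro σ hσ d hd
  obtain ⟨δm, hδm, hboundm⟩ :=
    exists_integral_levyDiscount_tauMinus_le P X hMeas hX0 hrc hσ hd 0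
  obtain ⟨δp, hδp, hboundp⟩ := exists_integral_levyDiscount_tauMinus_le P (-X)
    (fun t => (hMeas t).neg) (by filter_upwards [hX0] with ω hω using by simp [hω])
    (fun ω t => (hrc ω t).neg) hσ hd (-0)
  refine ⟨δm, δp, hδm, hδp, fun q hq x hx => hboundm q hq x (by linarith), fun q hq x hx => ?_⟩
  simp_rw [tauPlus_eq_tauMinus_neg X x 0]
  exact hboundp q hq (-x) (by linarith)

theorem expected_discount_bounded_away_from_one
    {Ω : Type*} [MeasurableSpace Ω] (P : Measure Ω) [IsProbabilityMeasure P]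
    (X : ℝ → Ω → ℝ)
    (hMeas : ∀ t : ℝ, Measurable (X t))
    (hX0 : ∀ᵐ ω ∂P, X 0 ω = 0)
    (hrc : ∀ ω : Ω, ∀ t : ℝ, ContinuousWithinAt (fun s => X s ω) (Set.Ici t) t)
    (hIndep : ∀ (n : ℕ) (t : Fin (n + 1) → ℝ), Monotone t → 0 ≤ t 0 →
      iIndepFun
        (fun i : Fin n => fun ω => X (t i.succ) ω - X (t i.castSucc) ω) P)
    (hStat : ∀ s t : ℝ, 0 ≤ s → 0 ≤ t →
      Measure.map (fun ω => X (t + s) ω - X s ω) P = Measure.map (X t) P) :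
    ∀ σ > (0 : ℝ), ∀ d > (0 : ℝ), ∃ δm δp : ℝ,
      δm ∈ Set.Ioo (0 : ℝ) 1 ∧ δp ∈ Set.Ioo (0 : ℝ) 1 ∧
      (∀ q ≥ σ, ∀ x ≥ d, (∫ ω, levyDiscount q (tauMinus X x 0 ω) ∂P) ≤ δm) ∧
      (∀ q ≥ σ, ∀ x ≤ -d, (∫ ω, levyDiscount q (tauPlus X x 0 ω) ∂P) ≤ δp) :=
  expected_discount_bounded_away_from_one_general P X hMeas hX0 hrc
end

section
/- Let ν ∈ (0,1), λ > 0, and ξ ∈ ℂ with Im ξ > −λ. Then the integral ∫_0^∞ (e^{iξx} − 1) e^{−λx} x^{−ν−1} dx converges absolutely and equals Γ(−ν) · ( (λ − iξ)^ν − λ^ν ), where z^ν denotes the principal branch of the complex power (well defined since Re(λ − iξ) = λ + Im ξ > 0) and Γ(−ν) is the value of the Gamma function at −ν. -/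
/-! With `a = λ - iξ` the integrand is `(e^{-ax} - e^{-λx}) x^{-ν-1}`, and the mean value bound
`|e^{-ax} - e^{-λx}| ≤ |a - λ| x e^{-cx}` (`c = min (Re a) λ > 0`) gives absolute convergence and
kills both boundary terms of an integration by parts against `x^{-ν}`. What remains is
`(1/ν) ∫₀^∞ (λ e^{-λx} - a e^{-ax}) x^{-ν} dx`, evaluated by `∫₀^∞ x^{s-1} e^{-ax} dx = Γ(s) / a^s`
for `Re a > 0`; this holds for real `a > 0` and extends to the right half-plane by analytic
continuation. Finally `Γ(1 - ν) = -ν Γ(-ν)`. -/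

open MeasureTheory Complex Set Filter Topology
open scoped Real

lemma integrableOn_rpow_mul_exp_neg_mul {c r : ℝ} (hc : 0 < c) (hr : -1 < r) :
    IntegrableOn (fun x : ℝ => x ^ r * Real.exp (-c * x)) (Ioi 0) := by
  simpa only [Real.rpow_one] using integrableOn_rpow_mul_exp_neg_mul_rpow hr one_pos hc

lemma norm_ofReal_rpow_mul_cexp {x : ℝ} (hx : 0 ≤ x) (r : ℝ) (a : ℂ) :
    ‖((x ^ r : ℝ) : ℂ) * cexp (-a * x)‖ = x ^ r * Real.exp (-a.re * x) := by
  rw [norm_mul, norm_real, Real.norm_of_nonneg (Real.rpow_nonneg hx r), norm_exp]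
  simp

lemma integrableOn_ofReal_rpow_mul_cexp {a : ℂ} (ha : 0 < a.re) {r : ℝ} (hr : -1 < r) :
    IntegrableOn (fun x : ℝ => ((x ^ r : ℝ) : ℂ) * cexp (-a * x)) (Ioi 0) := by
  refine (integrableOn_rpow_mul_exp_neg_mul ha hr).mono' (by fun_prop) ?_
  filter_upwards [ae_restrict_mem measurableSet_Ioi] with x hx
  exact (norm_ofReal_rpow_mul_cexp (le_of_lt hx) r a).le

lemma hasDerivAt_integral_ofReal_rpow_mul_cexp {r : ℝ} (hr : -1 < r) {a : ℂ} (ha : 0 < a.re) :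
    HasDerivAt (fun b : ℂ => ∫ x in Ioi 0, ((x ^ r : ℝ) : ℂ) * cexp (-b * x))
      (-∫ x in Ioi 0, ((x ^ (r + 1) : ℝ) : ℂ) * cexp (-a * x)) a := by
  obtain ⟨c, hc, hca⟩ : ∃ c, 0 < c ∧ c < a.re := exists_between ha
  have hball : Metric.ball a (a.re - c) ⊆ {b : ℂ | c < b.re} := fun b hb => by
    have := (abs_re_le_norm (b - a)).trans_lt (mem_ball_iff_norm.mp hb)
    rw [sub_re, abs_lt] at this
    show c < b.re
    linarith
  rw [← integral_neg]
  refine (hasDerivAt_integral_of_dominated_loc_of_deriv_le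
    (F := fun b x => ((x ^ r : ℝ) : ℂ) * cexp (-b * x))
    (F' := fun b x => -(((x ^ (r + 1) : ℝ) : ℂ) * cexp (-b * x)))
    (Metric.ball_mem_nhds a (sub_pos.mpr hca))
    (.of_forall fun b => by fun_prop) (integrableOn_ofReal_rpow_mul_cexp ha hr) (by fun_prop)
    (bound := fun x => x ^ (r + 1) * Real.exp (-c * x)) ?_
    (integrableOn_rpow_mul_exp_neg_mul hc (by linarith)) ?_).2
  · filter_upwards [ae_restrict_mem measurableSet_Ioi] with x (hx : 0 < x) b hb
    rw [norm_neg, norm_ofReal_rpow_mul_cexp hx.le]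
    gcongr
    exact (hball hb).le
  · filter_upwards [ae_restrict_mem measurableSet_Ioi] with x (hx : 0 < x) b _
    refine (((hasDerivAt_neg b).mul_const (x : ℂ)).cexp.const_mul ((x ^ r : ℝ) : ℂ)).congr_deriv ?_
    rw [Real.rpow_add_one hx.ne']
    push_cast
    ring

lemma frequently_nhdsNE_one_of_forall_ofReal_pos {P : ℂ → Prop} (hP : ∀ r : ℝ, 0 < r → P r) :
    ∃ᶠ z in 𝓝[≠] (1 : ℂ), P z := by
  have hmap : Tendsto ((↑) : ℝ → ℂ) (𝓝[≠] 1) (𝓝[≠] 1) :=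
    continuous_ofReal.continuousWithinAt.tendsto_nhdsWithin fun r hr => by
      simpa [← ofReal_one] using hr
  refine hmap.frequently (Eventually.frequently ?_)
  filter_upwards [nhdsWithin_le_nhds (Ioi_mem_nhds one_pos)] with r hr using hP r hr

theorem integral_ofReal_rpow_mul_cexp {r : ℝ} (hr : -1 < r) {a : ℂ} (ha : 0 < a.re) :
    ∫ x in Ioi 0, ((x ^ r : ℝ) : ℂ) * cexp (-a * x) = Real.Gamma (r + 1) / a ^ ((r : ℂ) + 1) := by
  set U := {b : ℂ | 0 < b.re}
  have hU : IsOpen U := isOpen_lt continuous_const continuous_re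
  have hne : ∀ b ∈ U, b ≠ 0 := fun b hb h => by simp [h, U] at hb
  have hF : AnalyticOnNhd ℂ (fun b : ℂ => ∫ x in Ioi 0, ((x ^ r : ℝ) : ℂ) * cexp (-b * x)) U :=
    DifferentiableOn.analyticOnNhd (fun b hb =>
      (hasDerivAt_integral_ofReal_rpow_mul_cexp hr hb).differentiableAt.differentiableWithinAt) hU
  have hG : AnalyticOnNhd ℂ (fun b : ℂ => (Real.Gamma (r + 1) : ℂ) / b ^ ((r : ℂ) + 1)) U := by
    refine DifferentiableOn.analyticOnNhd (fun b hb => ?_) hU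
    have hcpow := differentiableAt_id.cpow_const (c := (r : ℂ) + 1) (Or.inl hb)
    exact ((differentiableAt_const _).div hcpow (by simp [hne b hb])).differentiableWithinAt
  have hreal : ∀ t : ℝ, 0 < t → ∫ x in Ioi 0, ((x ^ r : ℝ) : ℂ) * cexp (-t * x) =
      Real.Gamma (r + 1) / (t : ℂ) ^ ((r : ℂ) + 1) := by
    intro t ht
    have h := Real.integral_rpow_mul_exp_neg_mul_Ioi (by linarith : 0 < r + 1) ht
    rw [add_sub_cancel_right, one_div, Real.inv_rpow ht.le] at h
    calc ∫ x in Ioi 0, ((x ^ r : ℝ) : ℂ) * cexp (-t * x)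
        = ∫ x in Ioi 0, ((x ^ r * Real.exp (-(t * x)) : ℝ) : ℂ) := by push_cast; ring_nf
      _ = Real.Gamma (r + 1) / (t : ℂ) ^ ((r : ℂ) + 1) := by
        rw [integral_complex_ofReal, h, ← ofReal_one, ← ofReal_add, ← ofReal_cpow ht.le]
        push_cast
        ring
  exact hF.eqOn_of_preconnected_of_frequently_eq hG (convex_halfSpace_re_gt 0).isPreconnected
    (by simp [U]) (frequently_nhdsNE_one_of_forall_ofReal_pos hreal) ha

lemma mul_integral_ofReal_rpow_neg_mul_cexp {ν : ℝ} (hν0 : ν ≠ 0) (hν1 : ν < 1) {z : ℂ}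
    (hz : 0 < z.re) :
    z * ∫ x in Ioi (0 : ℝ), ((x ^ (-ν) : ℝ) : ℂ) * cexp (-z * x) =
      -ν * Real.Gamma (-ν) * z ^ (ν : ℂ) := by
  have hz0 : z ≠ 0 := fun h => by simp [h] at hz
  have hpow : z ^ (ν : ℂ) = z / z ^ (((-ν : ℝ) : ℂ) + 1) :=
    calc z ^ (ν : ℂ) = z ^ (1 - (((-ν : ℝ) : ℂ) + 1)) := by push_cast; ring_nf
      _ = z / z ^ (((-ν : ℝ) : ℂ) + 1) := by rw [cpow_sub _ _ hz0, cpow_one]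
  rw [integral_ofReal_rpow_mul_cexp (by linarith) hz, Real.Gamma_add_one (neg_ne_zero.mpr hν0),
    hpow]
  push_cast
  ring

lemma norm_cexp_sub_cexp_le {z w : ℂ} {c : ℝ} (hz : z.re ≤ c) (hw : w.re ≤ c) :
    ‖cexp z - cexp w‖ ≤ Real.exp c * ‖z - w‖ :=
  (convex_halfSpace_re_le c).norm_image_sub_le_of_norm_hasDerivWithin_le
    (fun y _ => (hasDerivAt_exp y).hasDerivWithinAt)
    (fun y hy => by rw [norm_exp]; exact Real.exp_le_exp.mpr hy) hw hz

lemma norm_cexp_sub_cexp_mul_rpow_le (a b : ℂ) {x : ℝ} (hx : 0 < x) (r : ℝ) :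
    ‖(cexp (-a * x) - cexp (-b * x)) * ((x ^ r : ℝ) : ℂ)‖ ≤
      ‖a - b‖ * (x ^ (r + 1) * Real.exp (-min a.re b.re * x)) := by
  have hre : ∀ z : ℂ, min a.re b.re ≤ z.re → (-z * x).re ≤ -min a.re b.re * x := fun z hz => by
    simpa using mul_le_mul_of_nonneg_right hz hx.le
  have hexp := norm_cexp_sub_cexp_le (hre a (min_le_left _ _)) (hre b (min_le_right _ _))
  rw [norm_mul, norm_real, Real.norm_of_nonneg (Real.rpow_nonneg hx.le r),
    Real.rpow_add_one hx.ne']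
  calc ‖cexp (-a * x) - cexp (-b * x)‖ * x ^ r
      ≤ Real.exp (-min a.re b.re * x) * ‖-a * x - -b * x‖ * x ^ r := by gcongr
    _ = ‖a - b‖ * (x ^ r * x * Real.exp (-min a.re b.re * x)) := by
      rw [show -a * x - -b * x = -((a - b) * x) by ring, norm_neg, norm_mul, norm_real,
        Real.norm_of_nonneg hx.le]
      ring

lemma integrableOn_cexp_sub_cexp_mul_rpow {a b : ℂ} (ha : 0 < a.re) (hb : 0 < b.re) {r : ℝ}
    (hr : -2 < r) :
    IntegrableOn (fun x : ℝ => (cexp (-a * x) - cexp (-b * x)) * ((x ^ r : ℝ) : ℂ)) (Ioi 0) := by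
  refine ((integrableOn_rpow_mul_exp_neg_mul (lt_min ha hb) (by linarith : -1 < r + 1)).const_mul
    ‖a - b‖).mono' (by fun_prop) ?_
  filter_upwards [ae_restrict_mem measurableSet_Ioi] with x hx
  exact norm_cexp_sub_cexp_mul_rpow_le a b hx r

lemma tendsto_cexp_sub_cexp_mul_rpow_nhdsGT_zero (a b : ℂ) {r : ℝ} (hr : -1 < r) :
    Tendsto (fun x : ℝ => (cexp (-a * x) - cexp (-b * x)) * ((x ^ r : ℝ) : ℂ)) (𝓝[>] 0) (𝓝 0) := by
  have hcont : ContinuousAt (fun x : ℝ => x ^ (r + 1) * Real.exp (-min a.re b.re * x)) 0 :=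
    (Real.continuousAt_rpow_const 0 _ (Or.inr (by linarith))).mul (by fun_prop)
  have hbound : Tendsto (fun x : ℝ => ‖a - b‖ * (x ^ (r + 1) * Real.exp (-min a.re b.re * x)))
      (𝓝[>] 0) (𝓝 0) := by
    simpa [Real.zero_rpow (by linarith : r + 1 ≠ 0)] using
      (hcont.tendsto.const_mul ‖a - b‖).mono_left nhdsWithin_le_nhds
  exact squeeze_zero_norm'
    (eventually_nhdsWithin_of_forall fun x hx => norm_cexp_sub_cexp_mul_rpow_le a b hx r) hbound

lemma tendsto_cexp_sub_cexp_mul_rpow_atTop {a b : ℂ} (ha : 0 < a.re) (hb : 0 < b.re) (r : ℝ) :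
    Tendsto (fun x : ℝ => (cexp (-a * x) - cexp (-b * x)) * ((x ^ r : ℝ) : ℂ)) atTop (𝓝 0) := by
  have hbound := (tendsto_rpow_mul_exp_neg_mul_atTop_nhds_zero (r + 1) _ (lt_min ha hb)).const_mul
    ‖a - b‖
  rw [mul_zero] at hbound
  exact squeeze_zero_norm'
    ((eventually_gt_atTop 0).mono fun x hx => norm_cexp_sub_cexp_mul_rpow_le a b hx r) hbound

theorem integral_cexp_sub_cexp_mul_rpow {a b : ℂ} (ha : 0 < a.re) (hb : 0 < b.re) {ν : ℝ}
    (hν0 : ν ≠ 0) (hν1 : ν < 1) :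
    ∫ x in Ioi (0 : ℝ), (cexp (-a * x) - cexp (-b * x)) * ((x ^ (-ν - 1) : ℝ) : ℂ) =
      Real.Gamma (-ν) * (a ^ (ν : ℂ) - b ^ (ν : ℂ)) := by
  set u : ℝ → ℂ := fun x => cexp (-a * x) - cexp (-b * x)
  set u' : ℝ → ℂ := fun x => b * cexp (-b * x) - a * cexp (-a * x)
  set v : ℝ → ℂ := fun x => ((x ^ (-ν) : ℝ) : ℂ)
  set v' : ℝ → ℂ := fun x => ((-ν * x ^ (-ν - 1) : ℝ) : ℂ)
  have hu : ∀ x ∈ Ioi (0 : ℝ), HasDerivAt u (u' x) x := fun x _ => by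
    have hexp (z : ℂ) : HasDerivAt (fun y : ℝ => cexp (-z * y)) (-z * cexp (-z * x)) x :=
      (((hasDerivAt_id' (x : ℂ)).const_mul (-z)).cexp.comp_ofReal).congr_deriv (by ring)
    exact ((hexp a).sub (hexp b)).congr_deriv (by ring)
  have hv : ∀ x ∈ Ioi (0 : ℝ), HasDerivAt v (v' x) x := fun x hx =>
    (Real.hasDerivAt_rpow_const (Or.inl (ne_of_gt hx))).ofReal_comp
  have huv' : IntegrableOn (u * v') (Ioi 0) := by
    refine IntegrableOn.congr_fun ((integrableOn_cexp_sub_cexp_mul_rpow ha hb (r := -ν - 1)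
      (by linarith)).const_mul (-ν : ℂ)) (fun x _ => ?_) measurableSet_Ioi
    simp only [u, v', Pi.mul_apply]
    push_cast
    ring
  have hint (z : ℂ) (hz : 0 < z.re) :
      IntegrableOn (fun x : ℝ => z * (((x ^ (-ν) : ℝ) : ℂ) * cexp (-z * x))) (Ioi 0) :=
    (integrableOn_ofReal_rpow_mul_cexp hz (by linarith)).const_mul z
  have hu'v : IntegrableOn (u' * v) (Ioi 0) :=
    ((hint b hb).sub (hint a ha)).congr_fun
      (fun x _ => by simp only [u', v, Pi.mul_apply, Pi.sub_apply]; ring) measurableSet_Ioi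
  have hIBP := integral_Ioi_mul_deriv_eq_deriv_mul hu hv huv' hu'v
    (tendsto_cexp_sub_cexp_mul_rpow_nhdsGT_zero a b (by linarith))
    (tendsto_cexp_sub_cexp_mul_rpow_atTop ha hb (-ν))
  have hL : ∫ x in Ioi 0, u x * v' x =
      -ν * ∫ x in Ioi (0 : ℝ), (cexp (-a * x) - cexp (-b * x)) * ((x ^ (-ν - 1) : ℝ) : ℂ) := by
    rw [← integral_const_mul]
    refine integral_congr_ae (ae_of_all _ fun x => ?_)
    simp only [u, v']
    push_cast
    ring
  have hR : ∫ x in Ioi 0, u' x * v x = -ν * Real.Gamma (-ν) * (b ^ (ν : ℂ) - a ^ (ν : ℂ)) := by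
    rw [mul_sub, ← mul_integral_ofReal_rpow_neg_mul_cexp hν0 hν1 ha,
      ← mul_integral_ofReal_rpow_neg_mul_cexp hν0 hν1 hb, ← integral_const_mul,
      ← integral_const_mul, ← integral_sub (hint b hb) (hint a ha)]
    refine integral_congr_ae (ae_of_all _ fun x => ?_)
    simp only [u', v]
    ring
  rw [hL, hR] at hIBP
  exact mul_left_cancel₀ (neg_ne_zero.mpr (ofReal_ne_zero.mpr hν0)) (by linear_combination hIBP)

theorem kobol_gamma_integral
    (ν lam : ℝ) (hν : ν ∈ Set.Ioo (0 : ℝ) 1) (hlam : 0 < lam)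
    (ξ : ℂ) (hξ : -lam < ξ.im) :
    IntegrableOn
      (fun x : ℝ => (Complex.exp (Complex.I * ξ * x) - 1) *
        Complex.exp (-(lam : ℂ) * x) * ((x ^ (-ν - 1) : ℝ) : ℂ))
      (Set.Ioi (0 : ℝ)) ∧
    (∫ x in Set.Ioi (0 : ℝ), (Complex.exp (Complex.I * ξ * x) - 1) *
        Complex.exp (-(lam : ℂ) * x) * ((x ^ (-ν - 1) : ℝ) : ℂ)) =
      (Real.Gamma (-ν) : ℂ) *
        (((lam : ℂ) - Complex.I * ξ) ^ (ν : ℂ) - (lam : ℂ) ^ (ν : ℂ)) := by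
  have ha : 0 < ((lam : ℂ) - I * ξ).re := by
    simp only [sub_re, ofReal_re, mul_re, I_re, I_im, zero_mul, one_mul, zero_sub, sub_neg_eq_add]
    linarith
  have hlam' : 0 < (lam : ℂ).re := by rwa [ofReal_re]
  have hintegrand : (fun x : ℝ => (cexp (I * ξ * x) - 1) * cexp (-(lam : ℂ) * x) *
      ((x ^ (-ν - 1) : ℝ) : ℂ)) = fun x : ℝ =>
      (cexp (-((lam : ℂ) - I * ξ) * x) - cexp (-(lam : ℂ) * x)) * ((x ^ (-ν - 1) : ℝ) : ℂ) := by
    funext x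
    rw [sub_mul, one_mul, ← Complex.exp_add]
    ring_nf
  rw [hintegrand]
  exact ⟨integrableOn_cexp_sub_cexp_mul_rpow ha hlam' (by linarith [hν.2]),
    integral_cexp_sub_cexp_mul_rpow ha hlam' hν.1.ne' hν.2⟩
end

section
/- Let ν ∈ (0,2) with ν ≠ 1, c > 0 and λ_- < 0 < λ_+. Then for every φ ∈ (−π/2, π/2), lim_{ρ → +∞} ψ⁰(ρ e^{iφ}) / ρ^ν = c_∞(φ), where c_∞(φ) = −2 c Γ(−ν) cos(νπ/2) e^{iνφ}. -/
open Complex Set Filter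
open scoped Real Topology

/-- The KoBoL (CGMY) characteristic exponent without drift, with intensity `c`,
order `ν` and steepness parameters `λ₋ < 0 < λ₊`:
`ψ⁰(ξ) = c Γ(-ν)[(-λ₋)^ν - (-λ₋ - iξ)^ν + λ₊^ν - (λ₊ + iξ)^ν]`. -/
noncomputable def kobolPsi0 (ν c lamM lamP : ℝ) (ξ : ℂ) : ℂ :=
  (c : ℂ) * (Real.Gamma (-ν) : ℂ) *
    (((-lamM : ℝ) : ℂ) ^ (ν : ℂ) - ((-lamM : ℂ) - Complex.I * ξ) ^ (ν : ℂ) +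
      ((lamP : ℝ) : ℂ) ^ (ν : ℂ) - ((lamP : ℂ) + Complex.I * ξ) ^ (ν : ℂ))

/-! Write `ξ = ρ e^{iφ}`. Then `-λ₋ - iξ` and `λ₊ + iξ` are `ρ` times quantities tending to
`∓ i e^{iφ} = e^{i(φ ∓ π/2)}`, which for `|φ| < π/2` lie in the slit plane, where the principal
power is continuous; so after division by `ρ^ν` they tend to `e^{iν(φ ∓ π/2)}`, while the constant
terms are `o(ρ^ν)` as `ν > 0`. Finally `e^{iν(φ - π/2)} + e^{iν(φ + π/2)} = 2 cos(νπ/2) e^{iνφ}`. -/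

namespace Complex

lemma ofReal_mul_cpow {r : ℝ} (hr : 0 < r) (z w : ℂ) :
    ((r : ℂ) * z) ^ w = (r : ℂ) ^ w * z ^ w := by
  rcases eq_or_ne z 0 with rfl | hz
  · rcases eq_or_ne w 0 with rfl | hw <;> simp [zero_cpow, *]
  have hr' : (r : ℂ) ≠ 0 := ofReal_ne_zero.mpr hr.ne'
  rw [cpow_def_of_ne_zero (mul_ne_zero hr' hz), cpow_def_of_ne_zero hr', cpow_def_of_ne_zero hz,
    log_ofReal_mul hr hz, ← exp_add, add_mul, ofReal_log hr.le]

lemma exp_mul_I_cpow {θ : ℝ} (h₁ : -π < θ) (h₂ : θ ≤ π) (w : ℂ) :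
    exp (θ * I) ^ w = exp (θ * w * I) := by
  rw [cpow_def_of_ne_zero (exp_ne_zero _), log_exp (by simpa) (by simpa)]
  ring_nf

lemma exp_mul_I_mem_slitPlane {θ : ℝ} (h₁ : -π < θ) (h₂ : θ < π) : exp (θ * I) ∈ slitPlane := by
  rw [mem_slitPlane_iff_arg, arg_exp_mul_I, toIocMod_eq_self _ |>.mpr ⟨h₁, by linarith⟩]
  exact ⟨h₂.ne, exp_ne_zero _⟩

lemma I_mul_exp_I_mul (θ : ℝ) : I * exp (I * θ) = exp (↑(θ + π / 2) * I) := by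
  rw [ofReal_add, add_mul, exp_add, ofReal_div, ofReal_ofNat, exp_pi_div_two_mul_I]
  ring_nf

lemma neg_I_mul_exp_I_mul (θ : ℝ) : -(I * exp (I * θ)) = exp (↑(θ - π / 2) * I) := by
  rw [ofReal_sub, sub_mul, exp_sub, ofReal_div, ofReal_ofNat, exp_pi_div_two_mul_I]
  field_simp
  ring_nf
  simp

lemma exp_sub_mul_I_add_exp_add_mul_I (x y : ℂ) :
    exp ((x - y) * I) + exp ((x + y) * I) = 2 * cos y * exp (x * I) := by
  rw [cos, sub_mul, add_mul, exp_sub, exp_add, neg_mul, exp_neg]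
  field_simp
  ring

lemma tendsto_div_ofReal_cpow_atTop (a : ℂ) {w : ℂ} (hw : 0 < w.re) :
    Tendsto (fun ρ : ℝ => a / (ρ : ℂ) ^ w) atTop (𝓝 0) := by
  rw [tendsto_zero_iff_norm_tendsto_zero]
  refine ((tendsto_const_nhds (x := ‖a‖)).div_atTop (tendsto_rpow_atTop hw)).congr' ?_
  filter_upwards [eventually_gt_atTop 0] with ρ hρ
  rw [norm_div, norm_cpow_eq_rpow_re_of_pos hρ]

lemma tendsto_add_ofReal_mul_cpow_div_cpow (a : ℂ) {z : ℂ} (hz : z ∈ slitPlane) (w : ℂ) :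
    Tendsto (fun ρ : ℝ => (a + ρ * z) ^ w / (ρ : ℂ) ^ w) atTop (𝓝 (z ^ w)) := by
  have hlim : Tendsto (fun ρ : ℝ => a / ρ + z) atTop (𝓝 z) := by
    simpa using (tendsto_div_ofReal_cpow_atTop a (w := 1) one_pos).add_const z
  refine ((continuousAt_cpow_const hz).tendsto.comp hlim).congr' ?_
  filter_upwards [eventually_gt_atTop 0] with ρ hρ
  have hρ' : (ρ : ℂ) ≠ 0 := ofReal_ne_zero.mpr hρ.ne'
  rw [Function.comp_apply, show a + ρ * z = ρ * (a / ρ + z) by field_simp, ofReal_mul_cpow hρ,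
    mul_div_cancel_left₀ _ (cpow_ne_zero_iff.mpr (.inl hρ'))]

end Complex

theorem kobolPsi0_asymptotics_general
    (ν c lamM lamP : ℝ) (hν : ν ∈ Set.Ioo (0 : ℝ) 2)
    (φ : ℝ) (hφ : φ ∈ Set.Ioo (-(π / 2)) (π / 2)) :
    Tendsto
      (fun ρ : ℝ =>
        kobolPsi0 ν c lamM lamP ((ρ : ℂ) * Complex.exp (Complex.I * (φ : ℂ))) /
          (ρ : ℂ) ^ (ν : ℂ))
      atTop
      (𝓝 (-2 * (c : ℂ) * (Real.Gamma (-ν) : ℂ) * (Real.cos (ν * π / 2) : ℂ) *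
        Complex.exp (Complex.I * (ν : ℂ) * (φ : ℂ)))) := by
  obtain ⟨hφ₁, hφ₂⟩ := hφ
  set u := I * exp (I * φ) with hu
  have hu_plus : u = exp (↑(φ + π / 2) * I) := I_mul_exp_I_mul φ
  have hu_minus : -u = exp (↑(φ - π / 2) * I) := neg_I_mul_exp_I_mul φ
  have hν' : 0 < (ν : ℂ).re := by simpa using hν.1
  have hconst (a : ℂ) := tendsto_div_ofReal_cpow_atTop a hν'
  have hminus := tendsto_add_ofReal_mul_cpow_div_cpow (-lamM)
    (hu_minus ▸ exp_mul_I_mem_slitPlane (by linarith) (by linarith)) ν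
  have hplus := tendsto_add_ofReal_mul_cpow_div_cpow lamP
    (hu_plus ▸ exp_mul_I_mem_slitPlane (by linarith) (by linarith)) ν
  have hlim := ((((hconst (((-lamM : ℝ) : ℂ) ^ (ν : ℂ))).sub hminus).add
    (hconst ((lamP : ℂ) ^ (ν : ℂ)))).sub hplus).const_mul
    ((c : ℂ) * (Real.Gamma (-ν) : ℂ))
  convert hlim using 2 with ρ
  · rw [kobolPsi0, show (-lamM : ℂ) - I * (ρ * exp (I * φ)) = -lamM + ρ * -u by rw [hu]; ring,
      show (lamP : ℂ) + I * (ρ * exp (I * φ)) = lamP + ρ * u by rw [hu]; ring]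
    ring
  · rw [hu_minus, hu_plus, exp_mul_I_cpow (by linarith) (by linarith),
      exp_mul_I_cpow (by linarith) (by linarith),
      show ((φ - π / 2 : ℝ) : ℂ) * ν = φ * ν - ν * π / 2 by push_cast; ring,
      show ((φ + π / 2 : ℝ) : ℂ) * ν = φ * ν + ν * π / 2 by push_cast; ring,
      show I * ν * φ = φ * ν * I by ring]
    push_cast
    linear_combination ((c : ℂ) * (Real.Gamma (-ν) : ℂ)) *
      exp_sub_mul_I_add_exp_add_mul_I (φ * ν) (ν * π / 2)

theorem kobolPsi0_asymptotics
    (ν c lamM lamP : ℝ) (hν : ν ∈ Set.Ioo (0 : ℝ) 2) (hν1 : ν ≠ 1)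
    (hc : 0 < c) (hlamM : lamM < 0) (hlamP : 0 < lamP)
    (φ : ℝ) (hφ : φ ∈ Set.Ioo (-(π / 2)) (π / 2)) :
    Tendsto
      (fun ρ : ℝ =>
        kobolPsi0 ν c lamM lamP ((ρ : ℂ) * Complex.exp (Complex.I * (φ : ℂ))) /
          (ρ : ℂ) ^ (ν : ℂ))
      atTop
      (𝓝 (-2 * (c : ℂ) * (Real.Gamma (-ν) : ℂ) * (Real.cos (ν * π / 2) : ℂ) *
        Complex.exp (Complex.I * (ν : ℂ) * (φ : ℂ)))) :=
  kobolPsi0_asymptotics_general ν c lamM lamP hν φ hφ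
end

section
/- Let ν ∈ (0,2) with ν ≠ 1 and c > 0, and let c_∞(φ) = −2 c Γ(−ν) cos(νπ/2) e^{iνφ}. Then for every φ ∈ ℝ with |φ| < min(π/2, π/(2ν)), one has Re c_∞(φ) > 0. In particular, −2 c Γ(−ν) cos(νπ/2) > 0 for all ν ∈ (0,2)∖{1}, and for ν ∈ (0,1) the inequality Re c_∞(φ) > 0 holds for all φ ∈ (−π/2, π/2). -/
open Complex Set
open scoped Real

/-- The leading asymptotic coefficient of the KoBoL characteristic exponent:
`c_∞(φ) = -2 c Γ(-ν) cos(νπ/2) e^{iνφ}`. -/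
noncomputable def kobolCinf (ν c φ : ℝ) : ℂ :=
  -2 * (c : ℂ) * (Real.Gamma (-ν) : ℂ) * (Real.cos (ν * π / 2) : ℂ) *
    Complex.exp (Complex.I * (ν : ℂ) * (φ : ℂ))

/-! The sign of `Γ(-ν) cos(νπ/2)` comes from the reflection formula
`Γ(-ν) Γ(1 + ν) = -π / sin(πν)` and `sin(πν) = 2 sin(νπ/2) cos(νπ/2)`: the cosine cancels, leaving
`Γ(-ν) Γ(1 + ν) cos(νπ/2) = -π / (2 sin(νπ/2))`, which is negative for `ν ∈ (0, 2)`. Hence the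
coefficient `-2 c Γ(-ν) cos(νπ/2)` is positive, and `Re c_∞(φ)` is this coefficient times
`cos(νφ)`, positive as long as `|νφ| < π/2`. -/

namespace Real

theorem Gamma_neg_mul_Gamma_one_add_mul_cos {ν : ℝ} (hcos : cos (ν * π / 2) ≠ 0) :
    Gamma (-ν) * Gamma (1 + ν) * cos (ν * π / 2) = -π / (2 * sin (ν * π / 2)) := by
  have hsin : sin (π * -ν) = -(2 * sin (ν * π / 2) * cos (ν * π / 2)) := by
    rw [← sin_two_mul, ← sin_neg]
    ring_nf
  rw [← sub_neg_eq_add, Gamma_mul_Gamma_one_sub, hsin]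
  generalize sin (ν * π / 2) = s at hsin ⊢
  generalize cos (ν * π / 2) = k at hcos ⊢
  rcases eq_or_ne s 0 with hs | hs
  · -- both sides are junk values `x / 0 = 0`
    simp [hs]
  · field_simp

theorem cos_mul_pi_div_two_ne_zero {ν : ℝ} (hν : ν ∈ Icc (0 : ℝ) 2) (hν1 : ν ≠ 1) :
    cos (ν * π / 2) ≠ 0 := by
  intro h
  have hmem : ν * π / 2 ∈ Icc 0 π := ⟨by nlinarith [pi_pos, hν.1], by nlinarith [pi_pos, hν.2]⟩
  have hmem' : π / 2 ∈ Icc 0 π := ⟨by linarith [pi_pos], by linarith [pi_pos]⟩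
  have heq := injOn_cos hmem hmem' (h.trans cos_pi_div_two.symm)
  exact hν1 (by nlinarith [pi_pos])

theorem Gamma_neg_mul_cos_neg {ν : ℝ} (hν : ν ∈ Ioo (0 : ℝ) 2) (hν1 : ν ≠ 1) :
    Gamma (-ν) * cos (ν * π / 2) < 0 := by
  have hΓ : 0 < Gamma (1 + ν) := Gamma_pos_of_pos (by linarith [hν.1])
  have hsin : 0 < sin (ν * π / 2) :=
    sin_pos_of_pos_of_lt_pi (by nlinarith [pi_pos, hν.1]) (by nlinarith [pi_pos, hν.2])
  have hprod : Gamma (-ν) * cos (ν * π / 2) * Gamma (1 + ν) < 0 := by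
    rw [mul_right_comm, Gamma_neg_mul_Gamma_one_add_mul_cos
      (cos_mul_pi_div_two_ne_zero (Ioo_subset_Icc_self hν) hν1)]
    exact div_neg_of_neg_of_pos (neg_neg_of_pos pi_pos) (by positivity)
  exact neg_of_mul_neg_left hprod hΓ.le

end Real

theorem kobolCinf_re (ν c φ : ℝ) :
    (kobolCinf ν c φ).re =
      -2 * c * Real.Gamma (-ν) * Real.cos (ν * π / 2) * Real.cos (ν * φ) := by
  have hsplit : kobolCinf ν c φ = ((-2 * c * Real.Gamma (-ν) * Real.cos (ν * π / 2) : ℝ) : ℂ) *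
      exp ((ν * φ : ℝ) * I) := by
    rw [kobolCinf]
    push_cast
    ring_nf
  rw [hsplit, re_ofReal_mul, exp_ofReal_mul_I_re]

theorem kobolCinf_re_pos_of_abs_mul_lt {ν c φ : ℝ} (hν : ν ∈ Ioo (0 : ℝ) 2) (hν1 : ν ≠ 1)
    (hc : 0 < c) (hφ : |ν * φ| < π / 2) : 0 < (kobolCinf ν c φ).re := by
  have hcoef : 0 < -2 * c * Real.Gamma (-ν) * Real.cos (ν * π / 2) := by
    nlinarith [Real.Gamma_neg_mul_cos_neg hν hν1]
  rw [kobolCinf_re]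
  exact mul_pos hcoef (Real.cos_pos_of_mem_Ioo (abs_lt.mp hφ))

theorem kobolCinf_re_pos
    (ν c : ℝ) (hν : ν ∈ Set.Ioo (0 : ℝ) 2) (hν1 : ν ≠ 1) (hc : 0 < c) :
    (∀ φ : ℝ, |φ| < min (π / 2) (π / (2 * ν)) → 0 < (kobolCinf ν c φ).re) ∧
    0 < -2 * c * Real.Gamma (-ν) * Real.cos (ν * π / 2) ∧
    (ν < 1 → ∀ φ ∈ Set.Ioo (-(π / 2)) (π / 2), 0 < (kobolCinf ν c φ).re) := by
  have hν0 : 0 < ν := hν.1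
  refine ⟨fun φ hφ => kobolCinf_re_pos_of_abs_mul_lt hν hν1 hc ?_,
    by nlinarith [Real.Gamma_neg_mul_cos_neg hν hν1], fun hlt φ hφ =>
    kobolCinf_re_pos_of_abs_mul_lt hν hν1 hc ?_⟩
  · calc |ν * φ| = ν * |φ| := by rw [abs_mul, abs_of_pos hν0]
      _ < ν * (π / (2 * ν)) := mul_lt_mul_of_pos_left (hφ.trans_le (min_le_right _ _)) hν0
      _ = π / 2 := by field_simp
  · calc |ν * φ| = ν * |φ| := by rw [abs_mul, abs_of_pos hν0]
      _ ≤ |φ| := mul_le_of_le_one_left (abs_nonneg φ) hlt.le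
      _ < π / 2 := abs_lt.mpr hφ
end

section
/- Let ν ∈ (0,1), c > 0, μ ∈ ℝ, λ_- < 0 < λ_+, and let ψ(ξ) = −iμξ + ψ⁰(ξ) on the complex plane with the cuts i(−∞,λ_-] and i[λ_+,∞) removed. Then for every q > 0 there exist σ_-(q) and σ_+(q) with λ_- < σ_-(q) < 0 < σ_+(q) < λ_+ such that for every η ∈ ℂ with Im η ∈ (σ_-(q), σ_+(q)), the value q + ψ(η) does not belong to the half-line (−∞, 0] of the real axis. -/
open Complex Set

/-- The full KoBoL characteristic exponent with drift `μ`: `ψ(ξ) = -iμξ + ψ⁰(ξ)`. -/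
noncomputable def kobolPsi (ν c lamM lamP μ : ℝ) (ξ : ℂ) : ℂ :=
  -Complex.I * (μ : ℂ) * ξ + kobolPsi0 ν c lamM lamP ξ

/-!
For `ν ∈ (0, 1)` we have `Γ(-ν) < 0`, so `Re ψ⁰` is bounded below as soon as the real parts of
`(-λ₋ - iη)^ν` and `(λ₊ + iη)^ν` are bounded below. For `Re w ≥ 0` one has
`(Re w)^ν ≤ Re (w^ν)`: writing `w = r e^{iθ}` with `|θ| ≤ π/2`, this is `cos θ ^ ν ≤ cos (νθ)`,
which follows from weighted AM-GM and the concavity of `cos` on `[-π/2, π/2]`.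
On the strip `|Im η| ≤ δ` this gives `Re (q + ψ(η)) ≥ q - kobolStripBound δ`, where the bound is
continuous in `δ` and vanishes at `0`, so a small `δ` makes the real part positive.
-/

open Filter Topology
open scoped Real

lemma Real.cos_rpow_le_cos_mul {ν θ : ℝ} (hν0 : 0 ≤ ν) (hν1 : ν ≤ 1)
    (hθ : θ ∈ Icc (-(π / 2)) (π / 2)) : Real.cos θ ^ ν ≤ Real.cos (ν * θ) :=
  calc Real.cos θ ^ ν = Real.cos θ ^ ν * 1 ^ (1 - ν) := by rw [Real.one_rpow, mul_one]
    _ ≤ ν * Real.cos θ + (1 - ν) * 1 :=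
      Real.geom_mean_le_arith_mean2_weighted hν0 (by linarith) (Real.cos_nonneg_of_mem_Icc hθ)
        zero_le_one (by ring)
    _ ≤ Real.cos (ν * θ + (1 - ν) * 0) := by
      have hzero : (0 : ℝ) ∈ Icc (-(π / 2)) (π / 2) :=
        ⟨by linarith [Real.pi_pos], by linarith [Real.pi_pos]⟩
      simpa using strictConcaveOn_cos_Icc.concaveOn.2 hθ hzero hν0 (by linarith) (by ring)
    _ = Real.cos (ν * θ) := by rw [mul_zero, add_zero]

lemma Complex.re_rpow_le_re_cpow {w : ℂ} (hw : 0 ≤ w.re) {ν : ℝ} (hν0 : 0 ≤ ν)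
    (hν1 : ν ≤ 1) :
    w.re ^ ν ≤ (w ^ (ν : ℂ)).re := by
  have harg : arg w ∈ Icc (-(π / 2)) (π / 2) := abs_le.1 (abs_arg_le_pi_div_two_iff.2 hw)
  rw [cpow_ofReal_re, ← norm_mul_cos_arg, Real.mul_rpow (norm_nonneg w)
    (Real.cos_nonneg_of_mem_Icc harg), mul_comm (arg w)]
  exact mul_le_mul_of_nonneg_left (Real.cos_rpow_le_cos_mul hν0 hν1 harg) (by positivity)

lemma Real.Gamma_neg_lt_zero_of_mem_Ioo {ν : ℝ} (hν : ν ∈ Ioo 0 1) : Real.Gamma (-ν) < 0 := by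
  have h := Real.Gamma_add_one (s := -ν) (by linarith [hν.1])
  have hpos : 0 < Real.Gamma (-ν + 1) := Real.Gamma_pos_of_pos (by linarith [hν.2])
  nlinarith [hν.1]

lemma re_kobolPsi {ν c lamM lamP : ℝ} (μ : ℝ) (hlamM : lamM ≤ 0) (hlamP : 0 ≤ lamP) (η : ℂ) :
    (kobolPsi ν c lamM lamP μ η).re = μ * η.im + c * Real.Gamma (-ν) *
      ((-lamM) ^ ν - (((-lamM : ℂ) - I * η) ^ (ν : ℂ)).re +
        lamP ^ ν - (((lamP : ℂ) + I * η) ^ (ν : ℂ)).re) := by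
  rw [kobolPsi, kobolPsi0, ← ofReal_cpow (by linarith), ← ofReal_cpow hlamP]
  simp only [add_re, sub_re, mul_re, mul_im, neg_re, neg_im, I_re, I_im, ofReal_re, ofReal_im]
  ring

noncomputable def kobolStripBound (ν c lamM lamP μ δ : ℝ) : ℝ :=
  |μ| * δ -
    c * Real.Gamma (-ν) * ((-lamM) ^ ν - (-lamM - δ) ^ ν + (lamP ^ ν - (lamP - δ) ^ ν))

lemma continuous_kobolStripBound {ν : ℝ} (hν : 0 ≤ ν) (c lamM lamP μ : ℝ) :
    Continuous (kobolStripBound ν c lamM lamP μ) := by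
  have := Real.continuous_rpow_const hν
  unfold kobolStripBound
  fun_prop

lemma kobolStripBound_zero (ν c lamM lamP μ : ℝ) : kobolStripBound ν c lamM lamP μ 0 = 0 := by
  simp [kobolStripBound]

lemma exists_kobolStripBound_lt {ν : ℝ} (hν : 0 ≤ ν) (c : ℝ) {lamM lamP : ℝ} (hlamM : lamM < 0)
    (hlamP : 0 < lamP) (μ : ℝ) {q : ℝ} (hq : 0 < q) :
    ∃ δ, 0 < δ ∧ δ < -lamM ∧ δ < lamP ∧ kobolStripBound ν c lamM lamP μ δ < q := by
  have hbound : ∀ᶠ δ in 𝓝[>] 0, kobolStripBound ν c lamM lamP μ δ < q :=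
    nhdsWithin_le_nhds <| (continuous_kobolStripBound hν c lamM lamP μ).continuousAt.eventually_lt
      continuousAt_const (by rwa [kobolStripBound_zero])
  have hM : ∀ᶠ δ in 𝓝[>] (0 : ℝ), δ < -lamM :=
    nhdsWithin_le_nhds (eventually_lt_nhds (by linarith))
  have hP : ∀ᶠ δ in 𝓝[>] (0 : ℝ), δ < lamP := nhdsWithin_le_nhds (eventually_lt_nhds hlamP)
  exact (eventually_mem_nhdsWithin.and (hM.and (hP.and hbound))).exists

lemma neg_kobolStripBound_le_re_kobolPsi {ν c lamM lamP δ : ℝ} (μ : ℝ) (hν : ν ∈ Ioo 0 1)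
    (hc : 0 ≤ c) (hδM : δ < -lamM) (hδP : δ < lamP) {η : ℂ} (hη : |η.im| ≤ δ) :
    -kobolStripBound ν c lamM lamP μ δ ≤ (kobolPsi ν c lamM lamP μ η).re := by
  obtain ⟨hν0, hν1⟩ := hν
  obtain ⟨hηlo, hηhi⟩ := abs_le.1 hη
  have hcΓ : c * Real.Gamma (-ν) ≤ 0 :=
    mul_nonpos_of_nonneg_of_nonpos hc (Real.Gamma_neg_lt_zero_of_mem_Ioo ⟨hν0, hν1⟩).le
  have hM : (-lamM - δ) ^ ν ≤ (((-lamM : ℂ) - I * η) ^ (ν : ℂ)).re := by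
    have hre : ((-lamM : ℂ) - I * η).re = -lamM + η.im := by simp
    calc (-lamM - δ) ^ ν ≤ ((-lamM : ℂ) - I * η).re ^ ν :=
          Real.rpow_le_rpow (by linarith) (by rw [hre]; linarith) hν0.le
      _ ≤ _ := re_rpow_le_re_cpow (by rw [hre]; linarith) hν0.le hν1.le
  have hP : (lamP - δ) ^ ν ≤ (((lamP : ℂ) + I * η) ^ (ν : ℂ)).re := by
    have hre : ((lamP : ℂ) + I * η).re = lamP - η.im := by simp [sub_eq_add_neg]
    calc (lamP - δ) ^ ν ≤ ((lamP : ℂ) + I * η).re ^ ν :=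
          Real.rpow_le_rpow (by linarith) (by rw [hre]; linarith) hν0.le
      _ ≤ _ := re_rpow_le_re_cpow (by rw [hre]; linarith) hν0.le hν1.le
  have hdrift : -(|μ| * δ) ≤ μ * η.im := by
    have := abs_mul μ η.im ▸ mul_le_mul_of_nonneg_left hη (abs_nonneg μ)
    linarith [neg_abs_le (μ * η.im)]
  have hpow := mul_le_mul_of_nonpos_left (add_le_add hM hP) hcΓ
  rw [re_kobolPsi μ (by linarith) (by linarith), kobolStripBound]
  linarith

theorem kobol_q_plus_psi_avoids_negative_halfline
    (ν c lamM lamP μ : ℝ) (hν : ν ∈ Set.Ioo (0 : ℝ) 1)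
    (hc : 0 < c) (hlamM : lamM < 0) (hlamP : 0 < lamP) :
    ∀ q : ℝ, 0 < q → ∃ σm σp : ℝ,
      lamM < σm ∧ σm < 0 ∧ 0 < σp ∧ σp < lamP ∧
      ∀ η : ℂ, η.im ∈ Set.Ioo σm σp →
        ∀ x : ℝ, x ≤ 0 → (q : ℂ) + kobolPsi ν c lamM lamP μ η ≠ (x : ℂ) := by
  intro q hq
  obtain ⟨δ, hδ0, hδM, hδP, hδq⟩ := exists_kobolStripBound_lt hν.1.le c hlamM hlamP μ hq
  refine ⟨-δ, δ, by linarith, by linarith, hδ0, hδP, fun η hη x hx hqx => ?_⟩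
  have hre :=
    neg_kobolStripBound_le_re_kobolPsi μ hν hc.le hδM hδP (abs_le.2 ⟨hη.1.le, hη.2.le⟩)
  have hqx_re := congrArg re hqx
  rw [add_re, ofReal_re, ofReal_re] at hqx_re
  linarith
end

section
/- Let ω₁⁺ ≥ 0, b⁺ > 0, ω⁺ ∈ (0, π/2), ω₁⁻ ≤ 0, b⁻ > 0, ω⁻ ∈ (−π/2, 0), and consider the curves L⁺ = { iω₁⁺ + b⁺ sinh(iω⁺ + y) : y ∈ ℝ } (contained in the open upper half-plane) and L⁻ = { iω₁⁻ + b⁻ sinh(iω⁻ + y) : y ∈ ℝ } (contained in the open lower half-plane). Then there exists c > 0 such that for all η ∈ L⁺ and all ξ ∈ L⁻, Im(η − ξ) ≥ c |η|. -/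
/-!
Write `η = iω₁⁺ + b⁺ sinh(iω⁺ + y)`. Its imaginary part is `ω₁⁺ + b⁺ sin ω⁺ cosh y`, while
`‖sinh w‖ ≤ cosh (Re w)` gives `‖η‖ ≤ ω₁⁺ + b⁺ cosh y`; as `0 < sin ω⁺ ≤ 1`, this yields
`sin ω⁺ ‖η‖ ≤ Im η`. On the other curve `Im ξ = ω₁⁻ + b⁻ sin ω⁻ cosh z ≤ 0`, so `c = sin ω⁺` works.
-/

open Complex
open scoped Real

namespace Complex

theorem norm_sinh_le_cosh_re (w : ℂ) : ‖sinh w‖ ≤ Real.cosh w.re :=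
  calc ‖sinh w‖ = ‖exp w - exp (-w)‖ / 2 := by
        rw [sinh, norm_div, RCLike.norm_ofNat]
    _ ≤ (‖exp w‖ + ‖exp (-w)‖) / 2 := by gcongr; exact norm_sub_le _ _
    _ = Real.cosh w.re := by rw [norm_exp, norm_exp, neg_re, Real.cosh_eq]

theorem sinh_I_mul_add_ofReal_im (ω y : ℝ) : (sinh (I * ω + y)).im = Real.sin ω * Real.cosh y := by
  rw [sinh_add, mul_comm I, sinh_mul_I, cosh_mul_I, ← ofReal_sin, ← ofReal_cos,
    ← ofReal_sinh, ← ofReal_cosh]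
  simp only [add_im, mul_im, mul_re, ofReal_re, ofReal_im, I_re, I_im]
  ring

end Complex

noncomputable def sinhContour (ω₁ b ω y : ℝ) : ℂ :=
  I * ω₁ + b * sinh (I * ω + y)

section sinhContour

variable {ω₁ b ω : ℝ}

theorem sinhContour_im (y : ℝ) :
    (sinhContour ω₁ b ω y).im = ω₁ + b * (Real.sin ω * Real.cosh y) := by
  simp [sinhContour, sinh_I_mul_add_ofReal_im]

theorem norm_sinhContour_le (hω₁ : 0 ≤ ω₁) (hb : 0 ≤ b) (y : ℝ) :
    ‖sinhContour ω₁ b ω y‖ ≤ ω₁ + b * Real.cosh y := by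
  calc ‖sinhContour ω₁ b ω y‖ ≤ ‖I * ω₁‖ + ‖(b : ℂ)‖ * ‖sinh (I * ω + y)‖ :=
        (norm_add_le _ _).trans_eq (by rw [norm_mul (b : ℂ)])
    _ ≤ ω₁ + b * Real.cosh y := by
        rw [norm_mul, norm_I, one_mul, norm_real, norm_real, Real.norm_of_nonneg hω₁,
          Real.norm_of_nonneg hb]
        gcongr
        simpa using norm_sinh_le_cosh_re (I * ω + y)

theorem sin_mul_norm_sinhContour_le_im (hω₁ : 0 ≤ ω₁) (hb : 0 ≤ b) (hω : 0 ≤ Real.sin ω)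
    (y : ℝ) : Real.sin ω * ‖sinhContour ω₁ b ω y‖ ≤ (sinhContour ω₁ b ω y).im := by
  have := mul_le_mul_of_nonneg_left (norm_sinhContour_le (ω := ω) hω₁ hb y) hω
  rw [sinhContour_im]
  nlinarith [Real.sin_le_one ω]

theorem sinhContour_im_nonpos (hω₁ : ω₁ ≤ 0) (hb : 0 ≤ b) (hω : Real.sin ω ≤ 0) (y : ℝ) :
    (sinhContour ω₁ b ω y).im ≤ 0 := by
  rw [sinhContour_im]
  nlinarith [mul_nonpos_of_nonpos_of_nonneg hω (Real.cosh_pos y).le]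

end sinhContour

theorem sinh_curves_im_separation
    (ω1p bp ωp ω1m bm ωm : ℝ)
    (hω1p : 0 ≤ ω1p) (hbp : 0 < bp) (hωp : ωp ∈ Set.Ioo (0 : ℝ) (π / 2))
    (hω1m : ω1m ≤ 0) (hbm : 0 < bm) (hωm : ωm ∈ Set.Ioo (-(π / 2)) (0 : ℝ)) :
    ∃ c : ℝ, 0 < c ∧ ∀ y z : ℝ,
      c * ‖Complex.I * (ω1p : ℂ) + (bp : ℂ) *
          Complex.sinh (Complex.I * (ωp : ℂ) + (y : ℂ))‖ ≤
        ((Complex.I * (ω1p : ℂ) + (bp : ℂ) * Complex.sinh (Complex.I * (ωp : ℂ) + (y : ℂ))) -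
          (Complex.I * (ω1m : ℂ) + (bm : ℂ) *
            Complex.sinh (Complex.I * (ωm : ℂ) + (z : ℂ)))).im := by
  have hsinp : 0 < Real.sin ωp :=
    Real.sin_pos_of_pos_of_lt_pi hωp.1 (by linarith [hωp.2, Real.pi_pos])
  have hsinm : Real.sin ωm < 0 :=
    Real.sin_neg_of_neg_of_neg_pi_lt hωm.2 (by linarith [hωm.1, Real.pi_pos])
  refine ⟨Real.sin ωp, hsinp, fun y z => ?_⟩
  have hη := sin_mul_norm_sinhContour_le_im hω1p hbp.le hsinp.le y
  have hξ := sinhContour_im_nonpos hω1m hbm.le hsinm.le z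
  rw [sub_im]
  unfold sinhContour at hη hξ
  linarith
end

section
/- Let ω > 0, let g : ℝ → ℂ be such that t ↦ g(t + iω) is Lebesgue integrable on ℝ, let h ∈ ℝ, and define w(y) = (1/2π) ∫_ℝ e^{iy(t+iω)} g(t + iω) dt for y ∈ ℝ. Then for every ξ ∈ ℂ with Im ξ < ω, the integral ∫_h^∞ e^{−iyξ} w(y) dy converges absolutely and equals −(1/(2πi)) ∫_ℝ e^{ih(t+iω−ξ)} · g(t + iω) / (t + iω − ξ) dt. -/
open MeasureTheory Complex Set
open scoped Real

/-!
Write `e^{-iyξ} w(y)` as `(1/2π) ∫ e^{iy(t+z)} g(t+iω) dt` with `z = iω - ξ`, so `Im z > 0`. The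
double integral over `(h, ∞) × ℝ` is then dominated by `e^{-y Im z} |g(t+iω)|`, and Fubini reduces
everything to the elementary integral `∫_h^∞ e^{iyζ} dy = i e^{ihζ} / ζ` for `Im ζ > 0`.
-/

theorem norm_exp_I_mul_ofReal_mul (y : ℝ) (ζ : ℂ) :
    ‖exp (I * y * ζ)‖ = Real.exp (-ζ.im * y) := by
  rw [norm_exp]
  congr 1
  simp only [mul_re, mul_im, I_re, I_im, ofReal_re, ofReal_im]
  ring

theorem integral_Ioi_exp_I_mul {ζ : ℂ} (hζ : 0 < ζ.im) (h : ℝ) :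
    ∫ y in Ioi h, exp (I * y * ζ) = I * exp (I * h * ζ) / ζ := by
  have hre : (I * ζ).re < 0 := by simpa using hζ
  have hI : ∀ x : ℝ, I * x * ζ = I * ζ * x := fun x => by ring
  simp_rw [hI, integral_exp_mul_complex_Ioi hre h]
  rw [mul_comm I ζ, ← div_div, div_I]
  ring

section FubiniOnHalfLine

variable {f : ℝ → ℂ} {z : ℂ}

theorem integrable_exp_I_mul_prod (hf : Integrable f) (hz : 0 < z.im) (h : ℝ) :
    Integrable (Function.uncurry fun (y t : ℝ) => exp (I * y * (t + z)) * f t)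
      ((volume.restrict (Ioi h)).prod volume) := by
  refine ((exp_neg_integrableOn_Ioi h hz).mul_prod hf.norm).mono' ?_ ?_
  · exact (Continuous.aestronglyMeasurable (by fun_prop)).mul hf.1.comp_snd
  · filter_upwards with ⟨y, t⟩
    rw [Function.uncurry_apply_pair, norm_mul, norm_exp_I_mul_ofReal_mul, add_im, ofReal_im,
      zero_add]

theorem integrableOn_Ioi_integral_exp_I_mul (hf : Integrable f) (hz : 0 < z.im) (h : ℝ) :
    IntegrableOn (fun y : ℝ => ∫ t : ℝ, exp (I * y * (t + z)) * f t) (Ioi h) :=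
  (integrable_exp_I_mul_prod hf hz h).integral_prod_left

theorem integral_Ioi_integral_exp_I_mul (hf : Integrable f) (hz : 0 < z.im) (h : ℝ) :
    ∫ y in Ioi h, ∫ t : ℝ, exp (I * y * (t + z)) * f t =
      I * ∫ t : ℝ, exp (I * h * (t + z)) * f t / (t + z) := by
  rw [integral_integral_swap (integrable_exp_I_mul_prod hf hz h), ← integral_const_mul]
  congr 1 with t
  have him : 0 < ((t : ℂ) + z).im := by simpa using hz
  rw [integral_mul_const, integral_Ioi_exp_I_mul him]
  ring

end FubiniOnHalfLine

theorem fourier_projection_upper_halfline_general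
    (ω : ℝ) (g : ℂ → ℂ)
    (hg : Integrable (fun t : ℝ => g ((t : ℂ) + Complex.I * (ω : ℂ))))
    (h : ℝ)
    (w : ℝ → ℂ)
    (hw : ∀ y : ℝ, w y = (1 / (2 * (π : ℂ))) *
      ∫ t : ℝ, Complex.exp (Complex.I * (y : ℂ) * ((t : ℂ) + Complex.I * (ω : ℂ))) *
        g ((t : ℂ) + Complex.I * (ω : ℂ))) :
    ∀ ξ : ℂ, ξ.im < ω →
      IntegrableOn (fun y : ℝ => Complex.exp (-Complex.I * (y : ℂ) * ξ) * w y)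
        (Set.Ioi h) ∧
      (∫ y in Set.Ioi h, Complex.exp (-Complex.I * (y : ℂ) * ξ) * w y) =
        -(1 / (2 * (π : ℂ) * Complex.I)) *
          ∫ t : ℝ, Complex.exp (Complex.I * (h : ℂ) * ((t : ℂ) + Complex.I * (ω : ℂ) - ξ)) *
            g ((t : ℂ) + Complex.I * (ω : ℂ)) / ((t : ℂ) + Complex.I * (ω : ℂ) - ξ) := by
  intro ξ hξ
  have hz : 0 < (I * ω - ξ).im := by simpa using hξ
  have shifted : ∀ y : ℝ, exp (-I * y * ξ) * w y = (1 / (2 * (π : ℂ))) *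
      ∫ t : ℝ, exp (I * y * (t + (I * ω - ξ))) * g (t + I * ω) := by
    intro y
    rw [hw y, mul_left_comm, ← integral_const_mul]
    congr 2 with t
    rw [← mul_assoc, ← exp_add]
    ring_nf
  simp_rw [shifted, add_sub_assoc]
  refine ⟨(integrableOn_Ioi_integral_exp_I_mul hg hz h).const_mul _, ?_⟩
  rw [integral_const_mul, integral_Ioi_integral_exp_I_mul hg hz h, ← mul_assoc]
  congr 1
  rw [one_div, one_div, mul_inv, mul_inv, inv_I]
  ring

theorem fourier_projection_upper_halfline
    (ω : ℝ) (hω : 0 < ω) (g : ℂ → ℂ)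
    (hg : Integrable (fun t : ℝ => g ((t : ℂ) + Complex.I * (ω : ℂ))))
    (h : ℝ)
    (w : ℝ → ℂ)
    (hw : ∀ y : ℝ, w y = (1 / (2 * (π : ℂ))) *
      ∫ t : ℝ, Complex.exp (Complex.I * (y : ℂ) * ((t : ℂ) + Complex.I * (ω : ℂ))) *
        g ((t : ℂ) + Complex.I * (ω : ℂ))) :
    ∀ ξ : ℂ, ξ.im < ω →
      IntegrableOn (fun y : ℝ => Complex.exp (-Complex.I * (y : ℂ) * ξ) * w y)
        (Set.Ioi h) ∧
      (∫ y in Set.Ioi h, Complex.exp (-Complex.I * (y : ℂ) * ξ) * w y) =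
        -(1 / (2 * (π : ℂ) * Complex.I)) *
          ∫ t : ℝ, Complex.exp (Complex.I * (h : ℂ) * ((t : ℂ) + Complex.I * (ω : ℂ) - ξ)) *
            g ((t : ℂ) + Complex.I * (ω : ℂ)) / ((t : ℂ) + Complex.I * (ω : ℂ) - ξ) :=
  fourier_projection_upper_halfline_general ω g hg h w hw
end

section
/- Let ω < 0, let g : ℝ → ℂ be such that t ↦ g(t + iω) is Lebesgue integrable on ℝ, let h ∈ ℝ, and define w(y) = (1/2π) ∫_ℝ e^{iy(t+iω)} g(t + iω) dt for y ∈ ℝ. Then for every ξ ∈ ℂ with Im ξ > ω, the integral ∫_{−∞}^h e^{−iyξ} w(y) dy converges absolutely and equals (1/(2πi)) ∫_ℝ e^{ih(t+iω−ξ)} · g(t + iω) / (t + iω − ξ) dt. -/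
/-!
Inserting the definition of `w`, the integrand `e^{-iyξ} w(y)` becomes
`(1/2π) ∫ e^{κ(t) y} g(t + iω) dt` with `κ(t) = i(t + iω - ξ)`, whose real part `Im ξ - ω > 0`
does not depend on `t`. Hence `|e^{κ(t) y} g(t + iω)| = e^{(Im ξ - ω) y} |g(t + iω)|` is integrable
on `(-∞, h] × ℝ`, Fubini applies, and the inner integral `∫_{-∞}^h e^{κ(t) y} dy = e^{κ(t) h} / κ(t)`
is elementary.
-/

open MeasureTheory Complex Set
open scoped Real

section HalfLineExpIntegral

variable {α : Type*} [MeasurableSpace α] {μ : Measure α}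
  {κ : α → ℂ} {f : α → ℂ} {r : ℝ}

lemma integrable_prod_cexp_mul_Iic (hr : 0 < r) (hκre : ∀ t, (κ t).re = r)
    (hκ : Measurable κ) (hf : Integrable f μ) (h : ℝ) :
    Integrable (fun p : ℝ × α => cexp (κ p.2 * p.1) * f p.2)
      ((volume.restrict (Iic h)).prod μ) := by
  have hmeas : AEStronglyMeasurable (fun p : ℝ × α => cexp (κ p.2 * p.1) * f p.2)
      ((volume.restrict (Iic h)).prod μ) :=
    ((hκ.comp measurable_snd).mul (measurable_ofReal.comp measurable_fst)).cexp
      |>.aestronglyMeasurable.mul hf.aestronglyMeasurable.comp_snd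
  refine ((integrableOn_exp_mul_Iic hr h).mul_prod hf.norm).mono' hmeas (ae_of_all _ fun p => ?_)
  simp [norm_exp, hκre]

lemma integrableOn_Iic_integral_cexp_mul [SFinite μ] (hr : 0 < r) (hκre : ∀ t, (κ t).re = r)
    (hκ : Measurable κ) (hf : Integrable f μ) (h : ℝ) :
    IntegrableOn (fun y : ℝ => ∫ t, cexp (κ t * y) * f t ∂μ) (Iic h) :=
  (integrable_prod_cexp_mul_Iic hr hκre hκ hf h).integral_prod_left

lemma integral_Iic_integral_cexp_mul [SFinite μ] (hr : 0 < r) (hκre : ∀ t, (κ t).re = r)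
    (hκ : Measurable κ) (hf : Integrable f μ) (h : ℝ) :
    ∫ y in Iic h, ∫ t, cexp (κ t * y) * f t ∂μ = ∫ t, cexp (κ t * h) / κ t * f t ∂μ := by
  rw [integral_integral_swap (integrable_prod_cexp_mul_Iic hr hκre hκ hf h)]
  congr 1 with t
  rw [integral_mul_const, integral_exp_mul_complex_Iic (by rw [hκre]; exact hr)]

end HalfLineExpIntegral

theorem fourier_projection_lower_halfline_general
    (ω : ℝ) (g : ℂ → ℂ)
    (hg : Integrable (fun t : ℝ => g ((t : ℂ) + Complex.I * (ω : ℂ))))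
    (h : ℝ)
    (w : ℝ → ℂ)
    (hw : ∀ y : ℝ, w y = (1 / (2 * (π : ℂ))) *
      ∫ t : ℝ, Complex.exp (Complex.I * (y : ℂ) * ((t : ℂ) + Complex.I * (ω : ℂ))) *
        g ((t : ℂ) + Complex.I * (ω : ℂ))) :
    ∀ ξ : ℂ, ω < ξ.im →
      IntegrableOn (fun y : ℝ => Complex.exp (-Complex.I * (y : ℂ) * ξ) * w y)
        (Set.Iic h) ∧
      (∫ y in Set.Iic h, Complex.exp (-Complex.I * (y : ℂ) * ξ) * w y) =
        (1 / (2 * (π : ℂ) * Complex.I)) *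
          ∫ t : ℝ, Complex.exp (Complex.I * (h : ℂ) * ((t : ℂ) + Complex.I * (ω : ℂ) - ξ)) *
            g ((t : ℂ) + Complex.I * (ω : ℂ)) / ((t : ℂ) + Complex.I * (ω : ℂ) - ξ) := by
  intro ξ hξ
  set z : ℝ → ℂ := fun t => (t : ℂ) + I * ω
  have hκre : ∀ t, (I * (z t - ξ)).re = ξ.im - ω := fun t => by simp [z]
  have hκ : Measurable fun t => I * (z t - ξ) := by fun_prop
  have hr : 0 < ξ.im - ω := sub_pos.2 hξ
  have hpt : ∀ y : ℝ, cexp (-I * y * ξ) * w y =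
      1 / (2 * π) * ∫ t, cexp (I * (z t - ξ) * y) * g (z t) := fun y => by
    rw [hw, mul_left_comm, ← integral_const_mul]
    congr 2 with t
    rw [← mul_assoc, ← Complex.exp_add]
    congr 2
    ring
  refine ⟨((integrableOn_Iic_integral_cexp_mul hr hκre hκ hg h).const_mul _).congr
    (ae_of_all _ fun y => (hpt y).symm), ?_⟩
  have hrearrange : ∀ t, cexp (I * (z t - ξ) * h) / (I * (z t - ξ)) * g (z t) =
      I⁻¹ * (cexp (I * h * (z t - ξ)) * g (z t) / (z t - ξ)) := fun t => by
    have hzξ : z t - ξ ≠ 0 := fun h0 => by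
      have := congrArg Complex.im h0
      simp [z] at this
      linarith
    field_simp
  simp_rw [hpt]
  rw [integral_const_mul, integral_Iic_integral_cexp_mul hr hκre hκ hg h,
    integral_congr_ae (ae_of_all _ hrearrange), integral_const_mul]
  ring

theorem fourier_projection_lower_halfline
    (ω : ℝ) (hω : ω < 0) (g : ℂ → ℂ)
    (hg : Integrable (fun t : ℝ => g ((t : ℂ) + Complex.I * (ω : ℂ))))
    (h : ℝ)
    (w : ℝ → ℂ)
    (hw : ∀ y : ℝ, w y = (1 / (2 * (π : ℂ))) *
      ∫ t : ℝ, Complex.exp (Complex.I * (y : ℂ) * ((t : ℂ) + Complex.I * (ω : ℂ))) *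
        g ((t : ℂ) + Complex.I * (ω : ℂ))) :
    ∀ ξ : ℂ, ω < ξ.im →
      IntegrableOn (fun y : ℝ => Complex.exp (-Complex.I * (y : ℂ) * ξ) * w y)
        (Set.Iic h) ∧
      (∫ y in Set.Iic h, Complex.exp (-Complex.I * (y : ℂ) * ξ) * w y) =
        (1 / (2 * (π : ℂ) * Complex.I)) *
          ∫ t : ℝ, Complex.exp (Complex.I * (h : ℂ) * ((t : ℂ) + Complex.I * (ω : ℂ) - ξ)) *
            g ((t : ℂ) + Complex.I * (ω : ℂ)) / ((t : ℂ) + Complex.I * (ω : ℂ) - ξ) :=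
  fourier_projection_lower_halfline_general ω g hg h w hw
end

section
/- Let (Ω, F, ℙ) be a probability space, M : Ω → ℝ a random variable with M ≥ 0 almost surely, h ∈ ℝ, and ξ ∈ ℂ with Im ξ < 0 such that E[e^{(−Im ξ) M}] < ∞. Then the function x ↦ e^{−ixξ} ℙ(x + M ≥ h) is Lebesgue integrable on ℝ and ∫_ℝ e^{−ixξ} ℙ(x + M ≥ h) dx = e^{−ihξ} E[e^{iξM}] / (iξ). -/
/-!
Write `ℙ(x + M ≥ h) = E[1{x ≥ h - M}]`. By Fubini the integral becomes
`E[∫_{h - M}^∞ e^{-ixξ} dx] = E[e^{-i(h - M)ξ}] / (iξ)`; the swap is justified by Tonelli, since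
`∫_{h - M}^∞ |e^{-ixξ}| dx = e^{Im ξ (h - M)} / (-Im ξ)` is integrable by the exponential moment.
-/

open MeasureTheory Complex Set

lemma indicator_le_add_section_left {Ω E : Type*} [Zero E] (M : Ω → ℝ) (h : ℝ) (g : ℝ → E)
    (ω : Ω) :
    (fun x => {p : ℝ × Ω | h ≤ p.1 + M p.2}.indicator (fun p => g p.1) (x, ω)) =
      (Ici (h - M ω)).indicator g := by
  ext x
  simp only [indicator, mem_Ici, sub_le_iff_le_add]
  rfl

lemma indicator_le_add_section_right {Ω E : Type*} [Zero E] (M : Ω → ℝ) (h : ℝ) (g : ℝ → E)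
    (x : ℝ) :
    (fun ω => {p : ℝ × Ω | h ≤ p.1 + M p.2}.indicator (fun p => g p.1) (x, ω)) =
      {ω | h ≤ x + M ω}.indicator (fun _ => g x) :=
  rfl

section HalfLineFubini

variable {Ω E : Type*} [MeasurableSpace Ω] {P : Measure Ω} [SFinite P] [NormedAddCommGroup E]
  {M : Ω → ℝ} {h : ℝ} {g : ℝ → E}

lemma integrable_indicator_le_add_prod (hM : Measurable M) (hg : StronglyMeasurable g)
    (hgi : ∀ a, IntegrableOn g (Ici a))
    (hnorm : Integrable (fun ω => ∫ x in Ici (h - M ω), ‖g x‖) P) :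
    Integrable ({p : ℝ × Ω | h ≤ p.1 + M p.2}.indicator fun p => g p.1) (volume.prod P) := by
  have hS : MeasurableSet {p : ℝ × Ω | h ≤ p.1 + M p.2} :=
    measurableSet_le measurable_const (measurable_fst.add (hM.comp measurable_snd))
  have hmeas : AEStronglyMeasurable ({p : ℝ × Ω | h ≤ p.1 + M p.2}.indicator fun p => g p.1)
      (volume.prod P) :=
    ((hg.comp_measurable measurable_fst).indicator hS).aestronglyMeasurable
  refine (integrable_prod_iff' hmeas).mpr ⟨.of_forall fun ω => ?_, ?_⟩
  · rw [indicator_le_add_section_left, integrable_indicator_iff measurableSet_Ici]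
    exact hgi _
  · refine hnorm.congr (.of_forall fun ω => ?_)
    simp only [← integral_indicator measurableSet_Ici, ← norm_indicator_eq_indicator_norm,
      ← indicator_le_add_section_left M h g ω]

variable [NormedSpace ℝ E] [CompleteSpace E]

lemma integral_smul_measureReal_le_add (hM : Measurable M) (hg : StronglyMeasurable g)
    (hgi : ∀ a, IntegrableOn g (Ici a))
    (hnorm : Integrable (fun ω => ∫ x in Ici (h - M ω), ‖g x‖) P) :
    Integrable (fun x => P.real {ω | h ≤ x + M ω} • g x) ∧
      ∫ x, P.real {ω | h ≤ x + M ω} • g x = ∫ ω, (∫ x in Ici (h - M ω), g x) ∂P := by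
  have hf := integrable_indicator_le_add_prod hM hg hgi hnorm
  have hsection : ∀ x, ∫ ω, {p : ℝ × Ω | h ≤ p.1 + M p.2}.indicator (fun p => g p.1) (x, ω) ∂P
      = P.real {ω | h ≤ x + M ω} • g x := fun x => by
    have hSx : MeasurableSet {ω | h ≤ x + M ω} :=
      measurableSet_le measurable_const (measurable_const.add hM)
    rw [indicator_le_add_section_right, integral_indicator_const _ hSx]
  simp_rw [← hsection]
  refine ⟨hf.integral_prod_left, ?_⟩
  rw [integral_integral_swap
    (f := fun x ω => {p : ℝ × Ω | h ≤ p.1 + M p.2}.indicator (fun p => g p.1) (x, ω)) hf]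
  simp_rw [indicator_le_add_section_left, integral_indicator measurableSet_Ici]

end HalfLineFubini

section ExpHalfLine

lemma norm_cexp_neg_I_mul_mul (x : ℝ) (ξ : ℂ) :
    ‖cexp (-I * x * ξ)‖ = Real.exp (ξ.im * x) := by
  rw [norm_exp]
  congr 1
  simp only [neg_re, neg_im, mul_re, mul_im, I_re, I_im, ofReal_re, ofReal_im]
  ring

lemma cexp_neg_I_mul_mul_eq (x : ℝ) (ξ : ℂ) : cexp (-I * x * ξ) = cexp ((-I * ξ) * x) := by
  ring_nf

variable {ξ : ℂ}

lemma integrableOn_cexp_neg_I_mul_mul_Ici (hξ : ξ.im < 0) (a : ℝ) :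
    IntegrableOn (fun x : ℝ => cexp (-I * x * ξ)) (Ici a) := by
  rw [integrableOn_Ici_iff_integrableOn_Ioi]
  simp_rw [cexp_neg_I_mul_mul_eq]
  exact integrableOn_exp_mul_complex_Ioi (by simpa using hξ) a

lemma integral_cexp_neg_I_mul_mul_Ici (hξ : ξ.im < 0) (a : ℝ) :
    ∫ x in Ici a, cexp (-I * x * ξ) = cexp (-I * a * ξ) / (I * ξ) := by
  rw [integral_Ici_eq_integral_Ioi]
  simp_rw [cexp_neg_I_mul_mul_eq]
  rw [integral_exp_mul_complex_Ioi (by simpa using hξ), neg_mul, neg_div_neg_eq]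

lemma integral_norm_cexp_neg_I_mul_mul_Ici (hξ : ξ.im < 0) (a : ℝ) :
    ∫ x in Ici a, ‖cexp (-I * x * ξ)‖ = Real.exp (ξ.im * a) / -ξ.im := by
  simp_rw [norm_cexp_neg_I_mul_mul]
  rw [integral_Ici_eq_integral_Ioi, integral_exp_mul_Ioi hξ, neg_div, div_neg]

end ExpHalfLine

theorem fourier_transform_of_halfline_probability_general
    {Ω : Type*} [MeasurableSpace Ω] (P : Measure Ω) [IsProbabilityMeasure P]
    (M : Ω → ℝ) (hMmeas : Measurable M)
    (h : ℝ) (ξ : ℂ) (hξ : ξ.im < 0)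
    (hexp : Integrable (fun ω => Real.exp (-ξ.im * M ω)) P) :
    Integrable (fun x : ℝ => Complex.exp (-Complex.I * (x : ℂ) * ξ) *
        ((P {ω | h ≤ x + M ω}).toReal : ℂ)) ∧
    (∫ x : ℝ, Complex.exp (-Complex.I * (x : ℂ) * ξ) *
        ((P {ω | h ≤ x + M ω}).toReal : ℂ)) =
      Complex.exp (-Complex.I * (h : ℂ) * ξ) *
        (∫ ω, Complex.exp (Complex.I * ξ * (M ω : ℂ)) ∂P) / (Complex.I * ξ) := by
  have hnorm : Integrable (fun ω => ∫ x in Ici (h - M ω), ‖cexp (-I * x * ξ)‖) P := by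
    simp_rw [integral_norm_cexp_neg_I_mul_mul_Ici hξ, mul_sub, sub_eq_add_neg, Real.exp_add,
      ← neg_mul, div_eq_inv_mul, ← mul_assoc]
    exact hexp.const_mul _
  obtain ⟨hint, hintegral⟩ := integral_smul_measureReal_le_add (P := P) hMmeas
    (by fun_prop : Continuous fun x : ℝ => cexp (-I * x * ξ)).stronglyMeasurable
    (integrableOn_cexp_neg_I_mul_mul_Ici hξ) hnorm
  have hshift : ∀ ω, cexp (-I * ↑(h - M ω) * ξ) = cexp (-I * h * ξ) * cexp (I * ξ * M ω) :=
    fun ω => by rw [← Complex.exp_add]; push_cast; ring_nf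
  simp_rw [mul_comm (cexp _), ← measureReal_def, ← Complex.real_smul]
  refine ⟨hint, ?_⟩
  simp_rw [hintegral, integral_cexp_neg_I_mul_mul_Ici hξ, hshift, mul_div_right_comm _ (cexp _)]
  rw [integral_const_mul]
  ring

theorem fourier_transform_of_halfline_probability
    {Ω : Type*} [MeasurableSpace Ω] (P : Measure Ω) [IsProbabilityMeasure P]
    (M : Ω → ℝ) (hMmeas : Measurable M) (hMpos : ∀ᵐ ω ∂P, 0 ≤ M ω)
    (h : ℝ) (ξ : ℂ) (hξ : ξ.im < 0)
    (hexp : Integrable (fun ω => Real.exp (-ξ.im * M ω)) P) :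
    Integrable (fun x : ℝ => Complex.exp (-Complex.I * (x : ℂ) * ξ) *
        ((P {ω | h ≤ x + M ω}).toReal : ℂ)) ∧
    (∫ x : ℝ, Complex.exp (-Complex.I * (x : ℂ) * ξ) *
        ((P {ω | h ≤ x + M ω}).toReal : ℂ)) =
      Complex.exp (-Complex.I * (h : ℂ) * ξ) *
        (∫ ω, Complex.exp (Complex.I * ξ * (M ω : ℂ)) ∂P) / (Complex.I * ξ) :=
  fourier_transform_of_halfline_probability_general P M hMmeas h ξ hξ hexp
end
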